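/- Let λ₁ > 0, λ₂ > 0, α > 0 and θ ∈ [-1, 1]. Then D := λ₂α/(λ₁+λ₂α) + θλ₁·(2/(2λ₁+λ₂α) + 1/(λ₁+2λ₂α) - 2/(λ₁+λ₂α)) is strictly positive. -/
import Mathlib


theorem gwed_normalizing_constant_pos
    (l₁ l₂ α θ : ℝ) (hl₁ : 0 < l₁) (hl₂ : 0 < l₂) (hα : 0 < α)
    (hθ : θ ∈ Set.Icc (-1 : ℝ) 1) :
    0 < l₂ * α / (l₁ + l₂ * α)
        + θ * l₁ * (2 / (2 * l₁ + l₂ * α) + 1 / (l₁ + 2 * l₂ * α)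
          - 2 / (l₁ + l₂ * α)) := by
  obtain ⟨hθ1, hθ2⟩ := hθ
  have hb : 0 < l₂ * α := mul_pos hl₂ hα
  have h1 : 0 < l₁ + l₂ * α := by linarith
  have h2 : 0 < 2 * l₁ + l₂ * α := by linarith
  have h3 : 0 < l₁ + 2 * (l₂ * α) := by linarith
  have key : l₂ * α / (l₁ + l₂ * α)
        + θ * l₁ * (2 / (2 * l₁ + l₂ * α) + 1 / (l₁ + 2 * l₂ * α)
          - 2 / (l₁ + l₂ * α))
      = (l₂ * α) * ((2 * l₁ + l₂ * α) * (l₁ + 2 * (l₂ * α))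
          + θ * l₁ * (l₂ * α - l₁))
        / ((l₁ + l₂ * α) * ((2 * l₁ + l₂ * α) * (l₁ + 2 * (l₂ * α)))) := by
    field_simp
    ring
  rw [key]
  apply div_pos
  · apply mul_pos hb
    rcases le_total l₁ (l₂ * α) with h | h
    · nlinarith [mul_nonneg (mul_nonneg (by linarith : (0:ℝ) ≤ θ + 1) hl₁.le)
        (by linarith : (0:ℝ) ≤ l₂ * α - l₁)]
    · nlinarith [mul_nonneg (mul_nonneg (by linarith : (0:ℝ) ≤ 1 - θ) hl₁.le)
        (by linarith : (0:ℝ) ≤ l₁ - l₂ * α)]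
  · positivity
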